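/- arXiv:chao-dyn/9607016 — 2 statements merged into one kernel-verified Lean document; each statement's English description precedes it below -/
import Mathlib

section
/- Let u : ℝ → ℝ be continuously differentiable on [0,1] with u(0) = 0. Then ∫₀¹ u(x)⁴ dx ≤ 4 (∫₀¹ u(x)² dx) (∫₀¹ u'(x)² dx). -/
/-!
Since `u 0 = 0`, the fundamental theorem of calculus gives
`u x ^ 2 = ∫₀ˣ 2 u u' ≤ 2 ∫₀¹ |u| |u'|` for every `x ∈ [0,1]`, and by Cauchy–Schwarz the right-hand
side is at most `2 √((∫ u²)(∫ u'²))`. Squaring gives the pointwise bound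
`u x ^ 4 ≤ 4 (∫ u²)(∫ u'²)`, which integrates over an interval of length one.
-/

open Set MeasureTheory

theorem sq_integral_mul_le_integral_sq_mul_integral_sq {α : Type*} [MeasurableSpace α]
    {μ : Measure α} {f g : α → ℝ} (hf : Integrable (fun x => f x ^ 2) μ)
    (hg : Integrable (fun x => g x ^ 2) μ) (hfg : Integrable (fun x => f x * g x) μ) :
    (∫ x, f x * g x ∂μ) ^ 2 ≤ (∫ x, f x ^ 2 ∂μ) * ∫ x, g x ^ 2 ∂μ := by
  have hquad : ∀ t : ℝ, 0 ≤ (∫ x, f x ^ 2 ∂μ) * (t * t) + 2 * (∫ x, f x * g x ∂μ) * t +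
      ∫ x, g x ^ 2 ∂μ := by
    intro t
    have hexpand : ∫ x, (t * f x + g x) ^ 2 ∂μ =
        (t * t) * (∫ x, f x ^ 2 ∂μ) + (2 * t) * (∫ x, f x * g x ∂μ) + ∫ x, g x ^ 2 ∂μ := by
      rw [← integral_const_mul, ← integral_const_mul, ← integral_add,
        ← integral_add]
      · exact integral_congr_ae (.of_forall fun x => by ring)
      · exact (hf.const_mul _).add (hfg.const_mul _)
      · exact hg
      · exact hf.const_mul _
      · exact hfg.const_mul _
    have := hexpand ▸ integral_nonneg (μ := μ) fun x => sq_nonneg (t * f x + g x)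
    linarith
  have := discrim_le_zero hquad
  rw [discrim] at this
  nlinarith

open intervalIntegral

theorem sq_intervalIntegral_mul_le {f g : ℝ → ℝ} {a b : ℝ} (hab : a ≤ b)
    (hf : ContinuousOn f (Icc a b)) (hg : ContinuousOn g (Icc a b)) :
    (∫ x in a..b, f x * g x) ^ 2 ≤ (∫ x in a..b, f x ^ 2) * ∫ x in a..b, g x ^ 2 := by
  have integrableOn {h : ℝ → ℝ} (hh : ContinuousOn h (Icc a b)) : IntegrableOn h (Ioc a b) :=
    (intervalIntegrable_iff_integrableOn_Ioc_of_le hab).1 (hh.intervalIntegrable_of_Icc hab)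
  simp only [integral_of_le hab]
  exact sq_integral_mul_le_integral_sq_mul_integral_sq
    (integrableOn (hf.pow 2)) (integrableOn (hg.pow 2)) (integrableOn (hf.mul hg))

section DerivOnIcc

variable {u u' : ℝ → ℝ} {a b : ℝ}
  (hderiv : ∀ x ∈ Icc a b, HasDerivWithinAt u (u' x) (Icc a b) x)
  (hcont : ContinuousOn u' (Icc a b)) (ha : u a = 0)
include hderiv hcont ha

theorem sq_le_two_mul_integral_abs_mul_abs_deriv {x : ℝ} (hx : x ∈ Icc a b) :
    u x ^ 2 ≤ 2 * ∫ t in a..b, |u t| * |u' t| := by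
  have hu : ContinuousOn u (Icc a b) := fun y hy => (hderiv y hy).continuousWithinAt
  have hsub : Icc a x ⊆ Icc a b := Icc_subset_Icc_right hx.2
  have hprod : IntervalIntegrable (fun t => 2 * u t * u' t) volume a x :=
    ((continuousOn_const.mul hu).mul hcont).mono hsub |>.intervalIntegrable_of_Icc hx.1
  have hftc : ∫ t in a..x, 2 * u t * u' t = u x ^ 2 := by
    rw [integral_eq_sub_of_hasDerivAt_of_le (f := fun t => u t ^ 2) hx.1
      ((hu.mono hsub).pow 2) _ hprod, ha]
    · ring
    · intro t ht
      have hut := (hderiv t (hsub (Ioo_subset_Icc_self ht))).hasDerivAt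
        (Icc_mem_nhds ht.1 (ht.2.trans_le hx.2))
      simpa [mul_assoc] using hut.fun_pow 2
  have hint : ContinuousOn (fun t => 2 * (|u t| * |u' t|)) (Icc a b) :=
    continuousOn_const.mul (hu.abs.mul hcont.abs)
  calc u x ^ 2 = ∫ t in a..x, 2 * u t * u' t := hftc.symm
    _ ≤ ∫ t in a..x, 2 * (|u t| * |u' t|) := by
      refine integral_mono_on hx.1 hprod ((hint.mono hsub).intervalIntegrable_of_Icc hx.1)
        fun t _ => ?_
      rw [mul_assoc, ← abs_mul]
      linarith [le_abs_self (u t * u' t)]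
    _ ≤ ∫ t in a..b, 2 * (|u t| * |u' t|) :=
      integral_mono_interval le_rfl hx.1 hx.2
        (.of_forall fun t => by positivity) (hint.intervalIntegrable_of_Icc (hx.1.trans hx.2))
    _ = 2 * ∫ t in a..b, |u t| * |u' t| := integral_const_mul _ _

theorem pow_four_le_four_mul_integral_sq_mul_integral_sq_deriv {x : ℝ} (hx : x ∈ Icc a b) :
    u x ^ 4 ≤ 4 * (∫ t in a..b, u t ^ 2) * ∫ t in a..b, u' t ^ 2 := by
  have hu : ContinuousOn u (Icc a b) := fun y hy => (hderiv y hy).continuousWithinAt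
  have hab : a ≤ b := hx.1.trans hx.2
  set J := ∫ t in a..b, |u t| * |u' t|
  have hJ_nonneg : 0 ≤ J := integral_nonneg hab fun t _ => by positivity
  have hCS : J ^ 2 ≤ (∫ t in a..b, u t ^ 2) * ∫ t in a..b, u' t ^ 2 := by
    simpa only [sq_abs] using sq_intervalIntegral_mul_le hab hu.abs hcont.abs
  have hsq := sq_le_two_mul_integral_abs_mul_abs_deriv hderiv hcont ha hx
  calc u x ^ 4 = (u x ^ 2) ^ 2 := by ring
    _ ≤ (2 * J) ^ 2 := pow_le_pow_left₀ (sq_nonneg _) hsq 2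
    _ ≤ 4 * (∫ t in a..b, u t ^ 2) * ∫ t in a..b, u' t ^ 2 := by nlinarith

end DerivOnIcc

/-- If `u` is continuously differentiable on `[0,1]` with `u 0 = 0`,
then `∫₀¹ u⁴ ≤ 4 (∫₀¹ u²)(∫₀¹ u'²)`. -/
theorem integral_fourth_power_bound (u u' : ℝ → ℝ)
    (hderiv : ∀ x ∈ Set.Icc (0:ℝ) 1, HasDerivWithinAt u (u' x) (Set.Icc (0:ℝ) 1) x)
    (hcont : ContinuousOn u' (Set.Icc (0:ℝ) 1))
    (h0 : u 0 = 0) :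
    ∫ x in (0:ℝ)..1, (u x) ^ 4 ≤
      4 * (∫ x in (0:ℝ)..1, (u x) ^ 2) * ∫ x in (0:ℝ)..1, (u' x) ^ 2 := by
  have hu : ContinuousOn u (Icc 0 1) := fun x hx => (hderiv x hx).continuousWithinAt
  calc ∫ x in (0:ℝ)..1, u x ^ 4
      ≤ ∫ _ in (0:ℝ)..1, 4 * (∫ x in (0:ℝ)..1, u x ^ 2) * ∫ x in (0:ℝ)..1, u' x ^ 2 :=
        integral_mono_on zero_le_one ((hu.pow 4).intervalIntegrable_of_Icc zero_le_one)
          intervalIntegrable_const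
          fun x hx => pow_four_le_four_mul_integral_sq_mul_integral_sq_deriv hderiv hcont h0 hx
    _ = 4 * (∫ x in (0:ℝ)..1, u x ^ 2) * ∫ x in (0:ℝ)..1, u' x ^ 2 := by simp
end

section
/- Let a, b be real numbers with |a| + |b| > 0, set c := 36000 (|a|+|b|)⁴ and J₊ := (-20 + √(400 + c)) / c (the unique positive zero of f(J) = -J + 40J² + cJ³). Let u, v : ℝ × ℝ → ℝ be smooth (C^∞) on [0,∞) × [0,1], satisfying the coupled Burgers' equations ∂_t u = ∂_{xx} u − u ∂_x u − a ∂_x(uv) and ∂_t v = ∂_{xx} v − v ∂_x v − b ∂_x(uv) for all t ≥ 0 and x ∈ [0,1], with Dirichlet boundary conditions u(t,0) = u(t,1) = v(t,0) = v(t,1) = 0 for all t ≥ 0. Assume ½(∫₀¹ (∂_x u(0,x))² dx + ∫₀¹ (∂_x v(0,x))² dx) < J₊. Then the trajectory approaches the zero equilibrium in the max-norm: sup_{x ∈ [0,1]} |u(t,x)| → 0 and sup_{x ∈ [0,1]} |v(t,x)| → 0 as t → ∞. -/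
/-!
The energy `J(t) = ½ (‖∂ₓu(t)‖² + ‖∂ₓv(t)‖²)` (norms in `L²(0,1)`) obeys the differential
inequality `J' ≤ -J + 4 (1 + (|a| + |b|)²) J²`. To see it, differentiate under the integral,
exchange `∂ₜ∂ₓ = ∂ₓ∂ₜ`, integrate by parts (`∂ₜu` vanishes at `x = 0, 1`) and insert the equation:
`d/dt ½‖∂ₓu‖² = -‖∂ₓ²u‖² + ∫ (u ∂ₓu + a ∂ₓ(uv)) ∂ₓ²u`. The cubic terms are controlled by
Cauchy–Schwarz and the Agmon bound `sup |u| ≤ ‖∂ₓu‖`, the dissipation by `‖∂ₓu‖ ≤ ‖∂ₓ²u‖`.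
Since `4 (1 + (|a| + |b|)²) J₊ < 1`, the energy can never climb to a level `m` with
`4 (1 + (|a| + |b|)²) m < 1`, below which the inequality forces exponential decay; the Agmon bound
turns `J → 0` into uniform convergence.
-/

open Set MeasureTheory intervalIntegral Filter Topology
open scoped ContDiff

noncomputable section

section IntervalInequalities

variable {a b : ℝ} {f g : ℝ → ℝ}

theorem integral_abs_mul_abs_le_sqrt_mul_sqrt (hab : a ≤ b) (hf : ContinuousOn f (Icc a b))
    (hg : ContinuousOn g (Icc a b)) :
    ∫ x in a..b, |f x| * |g x| ≤ √(∫ x in a..b, f x ^ 2) * √(∫ x in a..b, g x ^ 2) := by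
  have memLp_two {h : ℝ → ℝ} (hh : ContinuousOn h (Icc a b)) :
      MemLp (fun x => |h x|) (ENNReal.ofReal 2) (volume.restrict (Ioc a b)) := by
    have hcont := hh.abs.mono Ioc_subset_Icc_self
    rw [ENNReal.ofReal_ofNat, memLp_two_iff_integrable_sq
      (hcont.aestronglyMeasurable measurableSet_Ioc)]
    exact ((hh.abs.pow 2).integrableOn_Icc).mono_set Ioc_subset_Icc_self
  have := integral_mul_le_Lp_mul_Lq_of_nonneg Real.HolderConjugate.two_two
    (ae_of_all _ fun x => abs_nonneg (f x)) (ae_of_all _ fun x => abs_nonneg (g x))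
    (memLp_two hf) (memLp_two hg)
  simpa only [integral_of_le hab, Real.sqrt_eq_rpow, Real.rpow_two, sq_abs] using this

theorem abs_le_sqrt_mul_integral_deriv_sq {f' : ℝ → ℝ} (hf : ContinuousOn f (Icc a b))
    (hf' : ContinuousOn f' (Icc a b)) (hderiv : ∀ y ∈ Ioo a b, HasDerivAt f (f' y) y)
    (ha : f a = 0) {x : ℝ} (hx : x ∈ Icc a b) :
    |f x| ≤ √((b - a) * ∫ y in a..b, f' y ^ 2) := by
  have hsub : Icc a x ⊆ Icc a b := Icc_subset_Icc_right hx.2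
  have hftc : ∫ y in a..x, f' y = f x := by
    rw [integral_eq_sub_of_hasDeriv_right_of_le hx.1 (hf.mono hsub)
      (fun y hy => (hderiv y ⟨hy.1, hy.2.trans_le hx.2⟩).hasDerivWithinAt)
      ((hf'.mono hsub).intervalIntegrable_of_Icc hx.1), ha, sub_zero]
  have hmono : ∫ y in a..x, f' y ^ 2 ≤ ∫ y in a..b, f' y ^ 2 :=
    integral_mono_interval le_rfl hx.1 hx.2 (ae_of_all _ fun y => sq_nonneg _)
      ((hf'.pow 2).intervalIntegrable_of_Icc (hx.1.trans hx.2))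
  calc |f x| = |∫ y in a..x, f' y * 1| := by simp [hftc]
    _ ≤ ∫ y in a..x, |f' y| * |1| := by
      simpa only [abs_mul] using abs_integral_le_integral_abs (f := fun y => f' y * 1) hx.1
    _ ≤ √(∫ y in a..x, f' y ^ 2) * √(∫ y in a..x, (1:ℝ) ^ 2) :=
      integral_abs_mul_abs_le_sqrt_mul_sqrt hx.1 (hf'.mono hsub) continuousOn_const
    _ = √((x - a) * ∫ y in a..x, f' y ^ 2) := by
      rw [one_pow, intervalIntegral.integral_const, smul_eq_mul, mul_one, mul_comm,
        Real.sqrt_mul (sub_nonneg.2 hx.1)]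
    _ ≤ √((b - a) * ∫ y in a..b, f' y ^ 2) := by
      refine Real.sqrt_le_sqrt (mul_le_mul (by linarith [hx.2]) hmono ?_ (by linarith [hx.1, hx.2]))
      exact integral_nonneg hx.1 fun y _ => sq_nonneg _

theorem sqrt_integral_deriv_sq_le {f' f'' : ℝ → ℝ} (hab : a ≤ b) (hf : ContinuousOn f (Icc a b))
    (hf' : ContinuousOn f' (Icc a b)) (hf'' : ContinuousOn f'' (Icc a b))
    (hderiv : ∀ y ∈ Ioo a b, HasDerivAt f (f' y) y)
    (hderiv' : ∀ y ∈ Ioo a b, HasDerivAt f' (f'' y) y) (ha : f a = 0) (hb : f b = 0) :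
    √(∫ x in a..b, f' x ^ 2) ≤ (b - a) * √(∫ x in a..b, f'' x ^ 2) := by
  have hIoo : Ioo (min a b) (max a b) = Ioo a b := by rw [min_eq_left hab, max_eq_right hab]
  set P := ∫ x in a..b, f' x ^ 2
  have hP : 0 ≤ P := integral_nonneg hab fun x _ => sq_nonneg _
  have hibp : P = -∫ x in a..b, f x * f'' x := by
    rw [integral_mul_deriv_eq_deriv_mul_of_hasDerivAt (u := f) (v := f') (u' := f') (v' := f'')
      (by rwa [uIcc_of_le hab]) (by rwa [uIcc_of_le hab]) (by rwa [hIoo]) (by rwa [hIoo])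
      (hf'.intervalIntegrable_of_Icc hab) (hf''.intervalIntegrable_of_Icc hab), ha, hb]
    simp [P, sq]
  have hf_sq : ∫ x in a..b, f x ^ 2 ≤ ((b - a) * √P) ^ 2 := by
    calc ∫ x in a..b, f x ^ 2 ≤ ∫ _ in a..b, (b - a) * P :=
          integral_mono_on hab ((hf.pow 2).intervalIntegrable_of_Icc hab)
            intervalIntegrable_const fun x hx => by
              simpa using (Real.le_sqrt (abs_nonneg _) (mul_nonneg (sub_nonneg.2 hab) hP)).1
                (abs_le_sqrt_mul_integral_deriv_sq hf hf' hderiv ha hx)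
      _ = ((b - a) * √P) ^ 2 := by
        rw [intervalIntegral.integral_const, smul_eq_mul, mul_pow, Real.sq_sqrt hP]; ring
  have hP_le : P ≤ (b - a) * √P * √(∫ x in a..b, f'' x ^ 2) :=
    calc P ≤ ∫ x in a..b, |f x| * |f'' x| := by
          rw [hibp]
          refine (neg_le_abs _).trans ?_
          simpa only [abs_mul] using abs_integral_le_integral_abs (f := fun x => f x * f'' x) hab
      _ ≤ √(∫ x in a..b, f x ^ 2) * √(∫ x in a..b, f'' x ^ 2) :=
          integral_abs_mul_abs_le_sqrt_mul_sqrt hab hf hf''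
      _ ≤ (b - a) * √P * √(∫ x in a..b, f'' x ^ 2) := by
          have hba : 0 ≤ (b - a) * √P := mul_nonneg (sub_nonneg.2 hab) (Real.sqrt_nonneg _)
          gcongr
          exact (Real.sqrt_le_sqrt hf_sq).trans_eq (Real.sqrt_sq hba)
  rcases (Real.sqrt_nonneg P).eq_or_lt with h0 | hpos
  · rw [← h0]
    exact mul_nonneg (sub_nonneg.2 hab) (Real.sqrt_nonneg _)
  · refine le_of_mul_le_mul_right ?_ hpos
    rw [Real.mul_self_sqrt hP]
    linarith

theorem abs_integral_mul_mul_le {h : ℝ → ℝ} {M : ℝ} (hab : a ≤ b) (hf : ContinuousOn f (Icc a b))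
    (hg : ContinuousOn g (Icc a b)) (hh : ContinuousOn h (Icc a b))
    (hfM : ∀ x ∈ Icc a b, |f x| ≤ M) :
    |∫ x in a..b, f x * g x * h x| ≤ M * (√(∫ x in a..b, g x ^ 2) * √(∫ x in a..b, h x ^ 2)) :=
  calc |∫ x in a..b, f x * g x * h x| ≤ ∫ x in a..b, |f x * g x * h x| :=
        abs_integral_le_integral_abs hab
    _ ≤ ∫ x in a..b, M * (|g x| * |h x|) :=
        integral_mono_on hab (((hf.mul hg).mul hh).abs.intervalIntegrable_of_Icc hab)
          ((continuousOn_const.mul (hg.abs.mul hh.abs)).intervalIntegrable_of_Icc hab)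
          fun x hx => by
            rw [abs_mul, abs_mul, mul_assoc]
            exact mul_le_mul_of_nonneg_right (hfM x hx) (by positivity)
    _ = M * ∫ x in a..b, |g x| * |h x| := intervalIntegral.integral_const_mul _ _
    _ ≤ M * (√(∫ x in a..b, g x ^ 2) * √(∫ x in a..b, h x ^ 2)) :=
        mul_le_mul_of_nonneg_left (integral_abs_mul_abs_le_sqrt_mul_sqrt hab hg hh)
          ((abs_nonneg _).trans (hfM a (left_mem_Icc.2 hab)))

end IntervalInequalities

section EnergyDecay

variable {E D : ℝ → ℝ} {C : ℝ}

theorem forall_lt_of_deriv_le_neg_add_mul_sq {m : ℝ} (hCm : C * m ≤ 1)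
    (hE : ContinuousOn E (Ici 0)) (hD : ∀ t > 0, HasDerivAt E (D t) t)
    (hDle : ∀ t > 0, D t ≤ -E t + C * E t ^ 2) (hE_nonneg : ∀ t ≥ 0, 0 ≤ E t)
    (hE0 : E 0 < m) : ∀ t ≥ 0, E t < m := by
  by_contra! hexit
  set S := Ici 0 ∩ E ⁻¹' Ici m
  have hS : IsClosed S := hE.preimage_isClosed_of_isClosed isClosed_Ici isClosed_Ici
  have hS_bdd : BddBelow S := ⟨0, fun t ht => ht.1⟩
  obtain ⟨t₁, ht₁, hmt₁⟩ := hexit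
  have hmem : sInf S ∈ S := hS.csInf_mem ⟨t₁, ht₁, hmt₁⟩ hS_bdd
  have hbefore : ∀ t ∈ Ico 0 (sInf S), E t < m := fun t ht =>
    lt_of_not_ge fun hmt => (csInf_le hS_bdd ⟨ht.1, hmt⟩).not_gt ht.2
  have hanti : AntitoneOn E (Icc 0 (sInf S)) := by
    refine antitoneOn_of_deriv_nonpos (convex_Icc _ _) (hE.mono Icc_subset_Ici_self)
      (fun t ht => ?_) fun t ht => ?_ <;> rw [interior_Icc] at ht
    · exact (hD t ht.1).differentiableAt.differentiableWithinAt
    rw [(hD t ht.1).deriv]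
    have hlt := hbefore t (Ioo_subset_Ico_self ht)
    have hnn := hE_nonneg t ht.1.le
    nlinarith [hDle t ht.1]
  have := hanti (left_mem_Icc.2 hmem.1) (right_mem_Icc.2 hmem.1) hmem.1
  exact absurd hmem.2 (not_le.2 (this.trans_lt hE0))

theorem tendsto_zero_of_deriv_le_neg_add_mul_sq (hC : 0 ≤ C)
    (hE : ContinuousOn E (Ici 0)) (hD : ∀ t > 0, HasDerivAt E (D t) t)
    (hDle : ∀ t > 0, D t ≤ -E t + C * E t ^ 2) (hE_nonneg : ∀ t ≥ 0, 0 ≤ E t)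
    (hE0 : C * E 0 < 1) : Tendsto E atTop (𝓝 0) := by
  obtain ⟨m, hCm, hm0⟩ : ∃ m, C * m < 1 ∧ E 0 < m :=
    ((((continuous_const_mul C).tendsto (E 0)).eventually (gt_mem_nhds hE0)).filter_mono
      (nhdsWithin_le_nhds (s := Ioi (E 0))) |>.and self_mem_nhdsWithin).exists
  have hbelow := forall_lt_of_deriv_le_neg_add_mul_sq hCm.le hE hD hDle hE_nonneg hm0
  set δ := 1 - C * m
  have hexp (t : ℝ) : HasDerivAt (fun s => Real.exp (δ * s)) (Real.exp (δ * t) * δ) t := by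
    simpa using ((hasDerivAt_id t).const_mul δ).exp
  have hanti : AntitoneOn (fun t => E t * Real.exp (δ * t)) (Ici 0) := by
    refine antitoneOn_of_deriv_nonpos (convex_Ici 0)
      (hE.mul (Real.continuous_exp.comp (continuous_const_mul δ)).continuousOn)
      (fun t ht => ?_) fun t ht => ?_ <;> rw [interior_Ici] at ht
    · exact ((hD t ht).fun_mul (hexp t)).differentiableAt.differentiableWithinAt
    rw [((hD t ht).fun_mul (hexp t)).deriv]
    have hnn := hE_nonneg t (le_of_lt ht)
    have hdecay : D t + δ * E t ≤ 0 := by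
      nlinarith [hDle t ht, mul_le_mul_of_nonneg_left (hbelow t ht.le).le hC]
    nlinarith [Real.exp_pos (δ * t)]
  have hbound : ∀ t ≥ 0, E t ≤ E 0 * Real.exp (-δ * t) := fun t ht => by
    have := hanti self_mem_Ici ht ht
    simp only [mul_zero, Real.exp_zero, mul_one] at this
    rw [neg_mul, Real.exp_neg, ← div_eq_mul_inv, le_div_iff₀ (Real.exp_pos _)]
    exact this
  have hlim : Tendsto (fun t => E 0 * Real.exp (-δ * t)) atTop (𝓝 0) := by
    simpa using (Real.tendsto_exp_neg_atTop_nhds_zero.comp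
      (tendsto_id.const_mul_atTop (sub_pos.2 hCm))).const_mul (E 0)
  exact squeeze_zero' (eventually_atTop.2 ⟨0, hE_nonneg⟩)
    (eventually_atTop.2 ⟨0, hbound⟩) hlim

end EnergyDecay

theorem neg_sq_add_mul_le {p A α : ℝ} (hp : 0 ≤ p) (hpA : p ≤ A) :
    -A ^ 2 + α * A ≤ -p ^ 2 / 2 + α ^ 2 / 2 := by
  nlinarith [sq_nonneg (A - α)]

namespace CoupledBurgers

def strip : Set (ℝ × ℝ) := Ici 0 ×ˢ Icc 0 1

/- Partial derivatives are taken within the closed strip, so they exist and are smooth up to its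
boundary; at interior points they agree with the two-sided `deriv` of the slices. -/
def partialX (w : ℝ × ℝ → ℝ) (p : ℝ × ℝ) : ℝ := fderivWithin ℝ w strip p (0, 1)

def partialT (w : ℝ × ℝ → ℝ) (p : ℝ × ℝ) : ℝ := fderivWithin ℝ w strip p (1, 0)

def energy (w : ℝ × ℝ → ℝ) (t : ℝ) : ℝ := ∫ x in (0:ℝ)..1, partialX w (t, x) ^ 2

-- `J₊` of the statement with `K = |a| + |b|`; at `K = 0` division by zero makes it `0`.
def criticalEnergy (K : ℝ) : ℝ := (-20 + √(400 + 36000 * K ^ 4)) / (36000 * K ^ 4)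

theorem uniqueDiffOn_strip : UniqueDiffOn ℝ strip :=
  (uniqueDiffOn_Ici 0).prod (uniqueDiffOn_Icc zero_lt_one)

theorem closure_interior_strip : closure (interior strip) = strip := by
  simp [strip, interior_prod_eq, closure_prod_eq]

variable {w : ℝ × ℝ → ℝ} {t x : ℝ}

theorem mk_mem_strip (ht : 0 ≤ t) (hx : x ∈ Icc (0:ℝ) 1) : (t, x) ∈ strip := ⟨ht, hx⟩

theorem contDiffOn_partialX (hw : ContDiffOn ℝ ∞ w strip) : ContDiffOn ℝ ∞ (partialX w) strip :=
  (hw.fderivWithin uniqueDiffOn_strip le_rfl).clm_apply contDiffOn_const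

theorem contDiffOn_partialT (hw : ContDiffOn ℝ ∞ w strip) : ContDiffOn ℝ ∞ (partialT w) strip :=
  (hw.fderivWithin uniqueDiffOn_strip le_rfl).clm_apply contDiffOn_const

theorem continuousOn_slice (hw : ContinuousOn w strip) (ht : 0 ≤ t) :
    ContinuousOn (fun y => w (t, y)) (Icc 0 1) :=
  hw.comp (continuous_const.prodMk continuous_id).continuousOn fun _ hy => mk_mem_strip ht hy

theorem hasDerivAt_partialX (hw : ContDiffOn ℝ ∞ w strip) (ht : 0 ≤ t) (hx : x ∈ Ioo (0:ℝ) 1) :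
    HasDerivAt (fun y => w (t, y)) (partialX w (t, x)) x :=
  ((hw.differentiableOn (by simp) _ (mk_mem_strip ht (Ioo_subset_Icc_self hx))).hasFDerivWithinAt
    |>.comp_hasDerivWithinAt x ((hasDerivAt_const x t).prodMk (hasDerivAt_id x)).hasDerivWithinAt
      fun _ hy => mk_mem_strip ht hy).hasDerivAt (Icc_mem_nhds hx.1 hx.2)

theorem hasDerivAt_partialT (hw : ContDiffOn ℝ ∞ w strip) (ht : 0 < t) (hx : x ∈ Icc (0:ℝ) 1) :
    HasDerivAt (fun s => w (s, x)) (partialT w (t, x)) t :=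
  ((hw.differentiableOn (by simp) _ (mk_mem_strip ht.le hx)).hasFDerivWithinAt
    |>.comp_hasDerivWithinAt t ((hasDerivAt_id t).prodMk (hasDerivAt_const t x)).hasDerivWithinAt
      fun _ hs => mk_mem_strip hs hx).hasDerivAt (Ici_mem_nhds ht)

theorem partialT_partialX (hw : ContDiffOn ℝ ∞ w strip) {p : ℝ × ℝ} (hp : p ∈ strip) :
    partialT (partialX w) p = partialX (partialT w) p := by
  have hsymm := ((hw p hp).isSymmSndFDerivWithinAt (by simp; norm_cast)
    uniqueDiffOn_strip (by rwa [closure_interior_strip]) hp) (1, 0) (0, 1)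
  have hD : DifferentiableWithinAt ℝ (fderivWithin ℝ w strip) strip p :=
    (hw.fderivWithin uniqueDiffOn_strip (m := ∞) le_rfl).differentiableOn (by simp) p hp
  change fderivWithin ℝ (fun q => fderivWithin ℝ w strip q (0, 1)) strip p (1, 0) =
    fderivWithin ℝ (fun q => fderivWithin ℝ w strip q (1, 0)) strip p (0, 1)
  rw [fderivWithin_clm_apply (uniqueDiffOn_strip p hp) hD (differentiableWithinAt_const _),
    fderivWithin_clm_apply (uniqueDiffOn_strip p hp) hD (differentiableWithinAt_const _)]
  simpa using hsymm

theorem partialT_eq_zero (hw : ContDiffOn ℝ ∞ w strip) (ht : 0 < t) (hx : x ∈ Icc (0:ℝ) 1)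
    (hzero : ∀ s ≥ 0, w (s, x) = 0) : partialT w (t, x) = 0 :=
  (hasDerivAt_partialT hw ht hx).unique <| (hasDerivAt_const t 0).congr_of_eventuallyEq <|
    eventually_of_mem (Ioi_mem_nhds ht) fun s hs => hzero s (le_of_lt hs)

theorem partialT_eq_of_deriv_eq {w₁ w₂ w₃ : ℝ × ℝ → ℝ} {κ : ℝ} (hw₁ : ContDiffOn ℝ ∞ w₁ strip)
    (hw₂ : ContDiffOn ℝ ∞ w₂ strip) (hw₃ : ContDiffOn ℝ ∞ w₃ strip) (ht : 0 < t)
    (hx : x ∈ Ioo (0:ℝ) 1)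
    (heq : deriv (fun s => w₁ (s, x)) t =
      deriv (deriv (fun y => w₁ (t, y))) x - w₁ (t, x) * deriv (fun y => w₁ (t, y)) x
        - κ * deriv (fun y => w₂ (t, y) * w₃ (t, y)) x) :
    partialT w₁ (t, x) = partialX (partialX w₁) (t, x) - w₁ (t, x) * partialX w₁ (t, x)
      - κ * (partialX w₂ (t, x) * w₃ (t, x) + w₂ (t, x) * partialX w₃ (t, x)) := by
  have hxx : deriv (deriv (fun y => w₁ (t, y))) x = partialX (partialX w₁) (t, x) := by
    have hev : deriv (fun y => w₁ (t, y)) =ᶠ[𝓝 x] fun y => partialX w₁ (t, y) :=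
      eventually_of_mem (Ioo_mem_nhds hx.1 hx.2) fun y hy =>
        (hasDerivAt_partialX hw₁ ht.le hy).deriv
    rw [hev.deriv_eq]
    exact (hasDerivAt_partialX (contDiffOn_partialX hw₁) ht.le hx).deriv
  rwa [(hasDerivAt_partialT hw₁ ht (Ioo_subset_Icc_self hx)).deriv, hxx,
    (hasDerivAt_partialX hw₁ ht.le hx).deriv,
    ((hasDerivAt_partialX hw₂ ht.le hx).fun_mul (hasDerivAt_partialX hw₃ ht.le hx)).deriv] at heq

theorem continuousOn_integral_of_continuousOn {g : ℝ × ℝ → ℝ} (hg : ContinuousOn g strip) :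
    ContinuousOn (fun s => ∫ x in (0:ℝ)..1, g (s, x)) (Ici 0) := by
  -- clamping both variables into the strip extends `g` continuously to the whole plane
  set clamp : ℝ × ℝ → ℝ × ℝ := fun p => (max p.1 0, max 0 (min p.2 1))
  have hG : Continuous (g ∘ clamp) := hg.comp_continuous (by fun_prop) fun p =>
    mk_mem_strip (le_max_right _ _) ⟨le_max_left _ _, max_le zero_le_one (min_le_right _ _)⟩
  refine (intervalIntegral.continuous_parametric_intervalIntegral_of_continuous'
    (μ := volume) (f := fun s x => (g ∘ clamp) (s, x)) hG 0 1).continuousOn.congr fun s hs => ?_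
  refine integral_congr fun x hx => ?_
  rw [uIcc_of_le zero_le_one] at hx
  simp [clamp, max_eq_left (mem_Ici.1 hs), min_eq_left hx.2, max_eq_right hx.1]

theorem hasDerivAt_integral_of_continuousOn {g g' : ℝ × ℝ → ℝ} (ht : 0 < t)
    (hg : ContinuousOn g strip) (hg' : ContinuousOn g' strip)
    (hderiv : ∀ s > 0, ∀ x ∈ Icc (0:ℝ) 1, HasDerivAt (fun s => g (s, x)) (g' (s, x)) s) :
    HasDerivAt (fun s => ∫ x in (0:ℝ)..1, g (s, x)) (∫ x in (0:ℝ)..1, g' (t, x)) t := by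
  have hK : Icc (t / 2) (2 * t) ×ˢ Icc (0:ℝ) 1 ⊆ strip :=
    prod_mono (Icc_subset_Ici_self.trans (Ici_subset_Ici.2 (by linarith))) subset_rfl
  obtain ⟨M, hM⟩ := (isCompact_Icc.prod isCompact_Icc).exists_bound_of_continuousOn (hg'.mono hK)
  have hnhds : Ioo (t / 2) (2 * t) ∈ 𝓝 t := Ioo_mem_nhds (by linarith) (by linarith)
  have hIoc : uIoc (0:ℝ) 1 ⊆ Icc 0 1 := by rw [uIoc_of_le zero_le_one]; exact Ioc_subset_Icc_self
  have hmeas {h : ℝ × ℝ → ℝ} (hh : ContinuousOn h strip) {s : ℝ} (hs : 0 ≤ s) :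
      AEStronglyMeasurable (fun x => h (s, x)) (volume.restrict (uIoc 0 1)) :=
    ((continuousOn_slice hh hs).mono hIoc).aestronglyMeasurable measurableSet_uIoc
  refine (intervalIntegral.hasDerivAt_integral_of_dominated_loc_of_deriv_le
    (F := fun s x => g (s, x)) (F' := fun s x => g' (s, x)) (bound := fun _ => M)
    hnhds (eventually_of_mem hnhds fun s hs => hmeas hg (by linarith [hs.1]))
    ((continuousOn_slice hg ht.le).intervalIntegrable_of_Icc zero_le_one) (hmeas hg' ht.le)
    (ae_of_all _ fun x hx s hs => hM (s, x) ⟨Ioo_subset_Icc_self hs, hIoc hx⟩)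
    intervalIntegrable_const
    (ae_of_all _ fun x hx s hs => hderiv s (by linarith [hs.1]) x (hIoc hx))).2

theorem energy_nonneg (w : ℝ × ℝ → ℝ) (t : ℝ) : 0 ≤ energy w t :=
  integral_nonneg zero_le_one fun _ _ => sq_nonneg _

theorem energy_eq_integral_deriv_sq (hw : ContDiffOn ℝ ∞ w strip) (ht : 0 ≤ t) :
    energy w t = ∫ x in (0:ℝ)..1, deriv (fun y => w (t, y)) x ^ 2 :=
  integral_congr_Ioo_of_le zero_le_one fun x hx => by rw [(hasDerivAt_partialX hw ht hx).deriv]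

theorem continuousOn_energy (hw : ContDiffOn ℝ ∞ w strip) : ContinuousOn (energy w) (Ici 0) :=
  continuousOn_integral_of_continuousOn ((contDiffOn_partialX hw).continuousOn.pow 2)

theorem hasDerivAt_energy (hw : ContDiffOn ℝ ∞ w strip) (ht : 0 < t) :
    HasDerivAt (energy w)
      (2 * ∫ x in (0:ℝ)..1, partialX w (t, x) * partialT (partialX w) (t, x)) t := by
  have hwx := contDiffOn_partialX hw
  rw [← intervalIntegral.integral_const_mul]
  exact hasDerivAt_integral_of_continuousOn (g := fun p => partialX w p ^ 2)
    (g' := fun p => 2 * (partialX w p * partialT (partialX w) p)) ht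
    (hwx.continuousOn.pow 2)
    (continuousOn_const.mul (hwx.continuousOn.mul (contDiffOn_partialT hwx).continuousOn))
    fun s hs x hx => ((hasDerivAt_partialT hwx hs hx).fun_pow 2).congr_deriv (by push_cast; ring)

theorem abs_le_sqrt_energy (hw : ContDiffOn ℝ ∞ w strip) (ht : 0 ≤ t) (h0 : w (t, 0) = 0)
    (hx : x ∈ Icc (0:ℝ) 1) : |w (t, x)| ≤ √(energy w t) := by
  simpa [energy] using abs_le_sqrt_mul_integral_deriv_sq (continuousOn_slice hw.continuousOn ht)
    (continuousOn_slice (contDiffOn_partialX hw).continuousOn ht)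
    (fun y hy => hasDerivAt_partialX hw ht hy) h0 hx

theorem sqrt_energy_le (hw : ContDiffOn ℝ ∞ w strip) (ht : 0 ≤ t) (h0 : w (t, 0) = 0)
    (h1 : w (t, 1) = 0) :
    √(energy w t) ≤ √(∫ x in (0:ℝ)..1, partialX (partialX w) (t, x) ^ 2) := by
  have hwx := contDiffOn_partialX hw
  simpa [energy] using sqrt_integral_deriv_sq_le zero_le_one
    (continuousOn_slice hw.continuousOn ht) (continuousOn_slice hwx.continuousOn ht)
    (continuousOn_slice (contDiffOn_partialX hwx).continuousOn ht)
    (fun y hy => hasDerivAt_partialX hw ht hy) (fun y hy => hasDerivAt_partialX hwx ht hy) h0 h1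

theorem tendsto_iSup_abs_of_tendsto_energy (hw : ContDiffOn ℝ ∞ w strip)
    (h0 : ∀ s ≥ 0, w (s, 0) = 0) (hE : Tendsto (energy w) atTop (𝓝 0)) :
    Tendsto (fun t => ⨆ x ∈ Icc (0:ℝ) 1, |w (t, x)|) atTop (𝓝 0) := by
  refine squeeze_zero' (Eventually.of_forall fun t => Real.iSup_nonneg fun x =>
    Real.iSup_nonneg fun _ => abs_nonneg _) ?_ (by simpa using hE.sqrt)
  filter_upwards [eventually_ge_atTop 0] with t ht
  exact Real.iSup_le (fun x => Real.iSup_le (fun hx => abs_le_sqrt_energy hw ht (h0 t ht) hx)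
    (Real.sqrt_nonneg _)) (Real.sqrt_nonneg _)

theorem integral_partialX_mul_partialT_partialX (hw : ContDiffOn ℝ ∞ w strip) (ht : 0 < t)
    (h0 : ∀ s ≥ 0, w (s, 0) = 0) (h1 : ∀ s ≥ 0, w (s, 1) = 0) :
    ∫ x in (0:ℝ)..1, partialX w (t, x) * partialT (partialX w) (t, x) =
      -∫ x in (0:ℝ)..1, partialT w (t, x) * partialX (partialX w) (t, x) := by
  have hwt := contDiffOn_partialT hw
  have hwx := contDiffOn_partialX hw
  rw [integral_congr fun x hx => by
      rw [partialT_partialX hw (mk_mem_strip ht.le (by rwa [uIcc_of_le zero_le_one] at hx))],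
    integral_mul_deriv_eq_deriv_mul_of_hasDerivAt
      (by rw [uIcc_of_le zero_le_one]; exact continuousOn_slice hwt.continuousOn ht.le)
      (by rw [uIcc_of_le zero_le_one]; exact continuousOn_slice hwx.continuousOn ht.le)
      (by simpa using fun x hx => hasDerivAt_partialX hwt ht.le hx)
      (by simpa using fun x hx => hasDerivAt_partialX hwx ht.le hx)
      ((continuousOn_slice (contDiffOn_partialX hwt).continuousOn ht.le).intervalIntegrable_of_Icc
        zero_le_one)
      ((continuousOn_slice (contDiffOn_partialX hwx).continuousOn ht.le).intervalIntegrable_of_Icc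
        zero_le_one),
    partialT_eq_zero hw ht (by simp) h0, partialT_eq_zero hw ht (by simp) h1]
  simp [mul_comm]

section Component

variable {w₁ w₂ w₃ : ℝ × ℝ → ℝ} {κ : ℝ}

theorem integral_partialT_mul_partialX_partialX (hw₁ : ContDiffOn ℝ ∞ w₁ strip)
    (hw₂ : ContDiffOn ℝ ∞ w₂ strip) (hw₃ : ContDiffOn ℝ ∞ w₃ strip) (ht : 0 < t)
    (hpde : ∀ x ∈ Ioo (0:ℝ) 1, partialT w₁ (t, x) =
      partialX (partialX w₁) (t, x) - w₁ (t, x) * partialX w₁ (t, x)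
        - κ * (partialX w₂ (t, x) * w₃ (t, x) + w₂ (t, x) * partialX w₃ (t, x))) :
    ∫ x in (0:ℝ)..1, partialT w₁ (t, x) * partialX (partialX w₁) (t, x) =
      (∫ x in (0:ℝ)..1, partialX (partialX w₁) (t, x) ^ 2)
        - (∫ x in (0:ℝ)..1, w₁ (t, x) * partialX w₁ (t, x) * partialX (partialX w₁) (t, x))
        - κ * (∫ x in (0:ℝ)..1, w₃ (t, x) * partialX w₂ (t, x) * partialX (partialX w₁) (t, x))
        - κ * ∫ x in (0:ℝ)..1, w₂ (t, x) * partialX w₃ (t, x) * partialX (partialX w₁) (t, x) := by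
  have c {w} (hw : ContDiffOn ℝ ∞ w strip) : ContinuousOn (fun y => w (t, y)) (Icc 0 1) :=
    continuousOn_slice hw.continuousOn ht.le
  have ii {f : ℝ → ℝ} (hf : ContinuousOn f (Icc 0 1)) : IntervalIntegrable f volume 0 1 :=
    hf.intervalIntegrable_of_Icc zero_le_one
  set W := fun x => partialX (partialX w₁) (t, x)
  have cW : ContinuousOn W (Icc 0 1) := c (contDiffOn_partialX (contDiffOn_partialX hw₁))
  have i₀ := ii (cW.fun_pow 2)
  have i₁ := ii (((c hw₁).fun_mul (c (contDiffOn_partialX hw₁))).fun_mul cW)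
  have i₂ := (ii (((c hw₃).fun_mul (c (contDiffOn_partialX hw₂))).fun_mul cW)).const_mul κ
  have i₃ := (ii (((c hw₂).fun_mul (c (contDiffOn_partialX hw₃))).fun_mul cW)).const_mul κ
  calc ∫ x in (0:ℝ)..1, partialT w₁ (t, x) * W x
      = ∫ x in (0:ℝ)..1, (W x ^ 2 - w₁ (t, x) * partialX w₁ (t, x) * W x
          - κ * (w₃ (t, x) * partialX w₂ (t, x) * W x)
          - κ * (w₂ (t, x) * partialX w₃ (t, x) * W x)) :=
        integral_congr_Ioo_of_le zero_le_one fun x hx => by simp only [W, hpde x hx]; ring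
    _ = _ := by
        rw [intervalIntegral.integral_sub ((i₀.sub i₁).sub i₂) i₃,
          intervalIntegral.integral_sub (i₀.sub i₁) i₂, intervalIntegral.integral_sub i₀ i₁,
          intervalIntegral.integral_const_mul, intervalIntegral.integral_const_mul]

theorem integral_partialX_mul_partialT_partialX_le (hw₁ : ContDiffOn ℝ ∞ w₁ strip)
    (hw₂ : ContDiffOn ℝ ∞ w₂ strip) (hw₃ : ContDiffOn ℝ ∞ w₃ strip) (ht : 0 < t)
    (hpde : ∀ x ∈ Ioo (0:ℝ) 1, partialT w₁ (t, x) =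
      partialX (partialX w₁) (t, x) - w₁ (t, x) * partialX w₁ (t, x)
        - κ * (partialX w₂ (t, x) * w₃ (t, x) + w₂ (t, x) * partialX w₃ (t, x)))
    (h₁0 : ∀ s ≥ 0, w₁ (s, 0) = 0) (h₁1 : ∀ s ≥ 0, w₁ (s, 1) = 0) (h₂ : w₂ (t, 0) = 0)
    (h₃ : w₃ (t, 0) = 0) :
    ∫ x in (0:ℝ)..1, partialX w₁ (t, x) * partialT (partialX w₁) (t, x) ≤
      -energy w₁ t / 2 + (energy w₁ t + 2 * |κ| * (√(energy w₂ t) * √(energy w₃ t))) ^ 2 / 2 := by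
  have c {w} (hw : ContDiffOn ℝ ∞ w strip) : ContinuousOn (fun y => w (t, y)) (Icc 0 1) :=
    continuousOn_slice hw.continuousOn ht.le
  have cW := c (contDiffOn_partialX (contDiffOn_partialX hw₁))
  rw [integral_partialX_mul_partialT_partialX hw₁ ht h₁0 h₁1,
    integral_partialT_mul_partialX_partialX hw₁ hw₂ hw₃ ht hpde]
  set A := √(∫ x in (0:ℝ)..1, partialX (partialX w₁) (t, x) ^ 2)
  set p := √(energy w₁ t)
  set q := √(energy w₂ t)
  set r := √(energy w₃ t)
  have b₁ : |∫ x in (0:ℝ)..1, w₁ (t, x) * partialX w₁ (t, x) * partialX (partialX w₁) (t, x)|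
      ≤ p * (p * A) :=
    abs_integral_mul_mul_le zero_le_one (c hw₁) (c (contDiffOn_partialX hw₁)) cW
      fun x hx => abs_le_sqrt_energy hw₁ ht.le (h₁0 t ht.le) hx
  have b₂ : |∫ x in (0:ℝ)..1, w₃ (t, x) * partialX w₂ (t, x) * partialX (partialX w₁) (t, x)|
      ≤ r * (q * A) :=
    abs_integral_mul_mul_le zero_le_one (c hw₃) (c (contDiffOn_partialX hw₂)) cW
      fun x hx => abs_le_sqrt_energy hw₃ ht.le h₃ hx
  have b₃ : |∫ x in (0:ℝ)..1, w₂ (t, x) * partialX w₃ (t, x) * partialX (partialX w₁) (t, x)|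
      ≤ q * (r * A) :=
    abs_integral_mul_mul_le zero_le_one (c hw₂) (c (contDiffOn_partialX hw₃)) cW
      fun x hx => abs_le_sqrt_energy hw₂ ht.le h₂ hx
  have hκ {I M : ℝ} (hI : |I| ≤ M) : κ * I ≤ |κ| * M :=
    (le_abs_self _).trans (abs_mul κ I ▸ mul_le_mul_of_nonneg_left hI (abs_nonneg κ))
  rw [← Real.sq_sqrt (integral_nonneg zero_le_one fun _ _ => sq_nonneg _),
    ← Real.sq_sqrt (energy_nonneg w₁ t)]
  calc _ ≤ -A ^ 2 + (p ^ 2 + 2 * |κ| * (q * r)) * A := by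
        linarith [(le_abs_self _).trans b₁, hκ b₂, hκ b₃]
    _ ≤ -p ^ 2 / 2 + (p ^ 2 + 2 * |κ| * (q * r)) ^ 2 / 2 :=
        neg_sq_add_mul_le (Real.sqrt_nonneg _)
          (sqrt_energy_le hw₁ ht.le (h₁0 t ht.le) (h₁1 t ht.le))

end Component

theorem integral_partialX_mul_partialT_partialX_add_le {u v : ℝ × ℝ → ℝ} {a b : ℝ}
    (hu : ContDiffOn ℝ ∞ u strip) (hv : ContDiffOn ℝ ∞ v strip) (ht : 0 < t)
    (hequ : ∀ x ∈ Ioo (0:ℝ) 1, partialT u (t, x) =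
      partialX (partialX u) (t, x) - u (t, x) * partialX u (t, x)
        - a * (partialX u (t, x) * v (t, x) + u (t, x) * partialX v (t, x)))
    (heqv : ∀ x ∈ Ioo (0:ℝ) 1, partialT v (t, x) =
      partialX (partialX v) (t, x) - v (t, x) * partialX v (t, x)
        - b * (partialX u (t, x) * v (t, x) + u (t, x) * partialX v (t, x)))
    (hbc : ∀ s ≥ 0, u (s, 0) = 0 ∧ u (s, 1) = 0 ∧ v (s, 0) = 0 ∧ v (s, 1) = 0) :
    (∫ x in (0:ℝ)..1, partialX u (t, x) * partialT (partialX u) (t, x)) +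
        ∫ x in (0:ℝ)..1, partialX v (t, x) * partialT (partialX v) (t, x) ≤
      -(1 / 2 * (energy u t + energy v t)) +
        4 * (1 + (|a| + |b|) ^ 2) * (1 / 2 * (energy u t + energy v t)) ^ 2 := by
  have hu0 := (hbc t ht.le).1
  have hv0 := (hbc t ht.le).2.2.1
  have hEu := integral_partialX_mul_partialT_partialX_le hu hu hv ht hequ
    (fun s hs => (hbc s hs).1) (fun s hs => (hbc s hs).2.1) hu0 hv0
  have hEv := integral_partialX_mul_partialT_partialX_le hv hu hv ht heqv
    (fun s hs => (hbc s hs).2.2.1) (fun s hs => (hbc s hs).2.2.2) hu0 hv0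
  set p := √(energy u t)
  set q := √(energy v t)
  have hquartic : (p ^ 2 + 2 * |a| * (p * q)) ^ 2 + (q ^ 2 + 2 * |b| * (p * q)) ^ 2 ≤
      2 * (1 + (|a| + |b|) ^ 2) * (p ^ 2 + q ^ 2) ^ 2 := by
    nlinarith [sq_nonneg (p ^ 2 - 2 * |a| * (p * q)), sq_nonneg (q ^ 2 - 2 * |b| * (p * q)),
      mul_nonneg (mul_nonneg (abs_nonneg a) (abs_nonneg b)) (sq_nonneg (p * q)),
      mul_nonneg (sq_nonneg (|a| + |b|)) (sq_nonneg (p ^ 2 - q ^ 2))]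
  rw [Real.sq_sqrt (energy_nonneg _ _), Real.sq_sqrt (energy_nonneg _ _)] at hquartic
  nlinarith

theorem four_mul_one_add_sq_mul_criticalEnergy_lt_one (K : ℝ) :
    4 * (1 + K ^ 2) * criticalEnergy K < 1 := by
  rcases eq_or_ne K 0 with rfl | hK
  · norm_num [criticalEnergy]
  have hc : 0 < 36000 * K ^ 4 := by positivity
  set s := √(400 + 36000 * K ^ 4)
  have hs : s ^ 2 = 400 + 36000 * K ^ 4 := Real.sq_sqrt (by positivity)
  have hs20 : 20 < s := by nlinarith [Real.sqrt_nonneg (400 + 36000 * K ^ 4)]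
  have hsK : 8 * K ^ 2 ≤ s := Real.le_sqrt_of_sq_le (by nlinarith [pow_nonneg (sq_nonneg K) 2])
  rw [criticalEnergy, mul_div_assoc', div_lt_one hc]
  nlinarith [mul_pos (sub_pos.2 hs20) (by linarith : (0:ℝ) < s + 16 - 4 * K ^ 2)]

end CoupledBurgers

open CoupledBurgers

theorem coupled_burgers_trajectories_to_zero_general (a b : ℝ)
    (c : ℝ) (hc : c = 36000 * (|a| + |b|) ^ 4)
    (Jplus : ℝ) (hJplus : Jplus = (-20 + Real.sqrt (400 + c)) / c)
    (u v : ℝ × ℝ → ℝ)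
    (hu : ContDiffOn ℝ (⊤ : ℕ∞) u (Set.Ici (0:ℝ) ×ˢ Set.Icc (0:ℝ) 1))
    (hv : ContDiffOn ℝ (⊤ : ℕ∞) v (Set.Ici (0:ℝ) ×ˢ Set.Icc (0:ℝ) 1))
    (hequ : ∀ t ≥ (0:ℝ), ∀ x ∈ Set.Icc (0:ℝ) 1,
      deriv (fun s => u (s, x)) t =
        deriv (deriv (fun y => u (t, y))) x - u (t, x) * deriv (fun y => u (t, y)) x
          - a * deriv (fun y => u (t, y) * v (t, y)) x)
    (heqv : ∀ t ≥ (0:ℝ), ∀ x ∈ Set.Icc (0:ℝ) 1,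
      deriv (fun s => v (s, x)) t =
        deriv (deriv (fun y => v (t, y))) x - v (t, x) * deriv (fun y => v (t, y)) x
          - b * deriv (fun y => u (t, y) * v (t, y)) x)
    (hbc : ∀ t ≥ (0:ℝ), u (t, 0) = 0 ∧ u (t, 1) = 0 ∧ v (t, 0) = 0 ∧ v (t, 1) = 0)
    (h0 : (1/2) * ((∫ x in (0:ℝ)..1, (deriv (fun y => u (0, y)) x) ^ 2)
        + ∫ x in (0:ℝ)..1, (deriv (fun y => v (0, y)) x) ^ 2) < Jplus) :
    Filter.Tendsto (fun t => ⨆ x ∈ Set.Icc (0:ℝ) 1, |u (t, x)|) Filter.atTop (nhds 0) ∧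
      Filter.Tendsto (fun t => ⨆ x ∈ Set.Icc (0:ℝ) 1, |v (t, x)|) Filter.atTop (nhds 0) := by
  set J := fun t => 1 / 2 * (energy u t + energy v t)
  set C := 4 * (1 + (|a| + |b|) ^ 2)
  have hJ0 : J 0 < Jplus := by
    simpa only [J, energy_eq_integral_deriv_sq hu le_rfl, energy_eq_integral_deriv_sq hv le_rfl]
      using h0
  have hCJ0 : C * J 0 < 1 := by
    subst hc hJplus
    exact (mul_lt_mul_of_pos_left hJ0 (by positivity)).trans
      (four_mul_one_add_sq_mul_criticalEnergy_lt_one _)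
  have hJ : Tendsto J atTop (𝓝 0) :=
    tendsto_zero_of_deriv_le_neg_add_mul_sq (by positivity)
      (((continuousOn_energy hu).add (continuousOn_energy hv)).const_smul (1 / 2 : ℝ))
      (fun t ht => (((hasDerivAt_energy hu ht).add (hasDerivAt_energy hv ht)).const_mul
        (1 / 2 : ℝ)).congr_deriv (by ring))
      (fun t ht => integral_partialX_mul_partialT_partialX_add_le hu hv ht
        (fun x hx => partialT_eq_of_deriv_eq hu hu hv ht hx (hequ t ht.le x (mem_Icc_of_Ioo hx)))
        (fun x hx => partialT_eq_of_deriv_eq hv hu hv ht hx (heqv t ht.le x (mem_Icc_of_Ioo hx)))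
        hbc)
      (fun t _ => mul_nonneg one_half_pos.le (add_nonneg (energy_nonneg u t) (energy_nonneg v t)))
      hCJ0
  have hsum : Tendsto (fun t => energy u t + energy v t) atTop (𝓝 0) := by
    simpa [J, ← mul_assoc] using hJ.const_mul 2
  exact ⟨tendsto_iSup_abs_of_tendsto_energy hu (fun s hs => (hbc s hs).1) <|
      squeeze_zero (energy_nonneg u) (fun t => le_add_of_nonneg_right (energy_nonneg v t)) hsum,
    tendsto_iSup_abs_of_tendsto_energy hv (fun s hs => (hbc s hs).2.2.1) <|
      squeeze_zero (energy_nonneg v) (fun t => le_add_of_nonneg_left (energy_nonneg u t)) hsum⟩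

/-- Main theorem: for smooth solutions `u, v` of the coupled Burgers' equations on
`[0,∞) × [0,1]` with zero Dirichlet boundary conditions and `|a| + |b| > 0`, if the
initial `H¹₀`-energy `½(‖∂ₓu(0)‖² + ‖∂ₓv(0)‖²)` is less than
`J₊ = (-20 + √(400 + c))/c` with `c = 36000(|a|+|b|)⁴`, then the trajectory approaches
the zero equilibrium in the max-norm:
`sup_{x ∈ [0,1]} |u(t,x)| → 0` and `sup_{x ∈ [0,1]} |v(t,x)| → 0` as `t → ∞`. -/
theorem coupled_burgers_trajectories_to_zero (a b : ℝ) (hab : 0 < |a| + |b|)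
    (c : ℝ) (hc : c = 36000 * (|a| + |b|) ^ 4)
    (Jplus : ℝ) (hJplus : Jplus = (-20 + Real.sqrt (400 + c)) / c)
    (u v : ℝ × ℝ → ℝ)
    (hu : ContDiffOn ℝ (⊤ : ℕ∞) u (Set.Ici (0:ℝ) ×ˢ Set.Icc (0:ℝ) 1))
    (hv : ContDiffOn ℝ (⊤ : ℕ∞) v (Set.Ici (0:ℝ) ×ˢ Set.Icc (0:ℝ) 1))
    (hequ : ∀ t ≥ (0:ℝ), ∀ x ∈ Set.Icc (0:ℝ) 1,
      deriv (fun s => u (s, x)) t =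
        deriv (deriv (fun y => u (t, y))) x - u (t, x) * deriv (fun y => u (t, y)) x
          - a * deriv (fun y => u (t, y) * v (t, y)) x)
    (heqv : ∀ t ≥ (0:ℝ), ∀ x ∈ Set.Icc (0:ℝ) 1,
      deriv (fun s => v (s, x)) t =
        deriv (deriv (fun y => v (t, y))) x - v (t, x) * deriv (fun y => v (t, y)) x
          - b * deriv (fun y => u (t, y) * v (t, y)) x)
    (hbc : ∀ t ≥ (0:ℝ), u (t, 0) = 0 ∧ u (t, 1) = 0 ∧ v (t, 0) = 0 ∧ v (t, 1) = 0)
    (h0 : (1/2) * ((∫ x in (0:ℝ)..1, (deriv (fun y => u (0, y)) x) ^ 2)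
        + ∫ x in (0:ℝ)..1, (deriv (fun y => v (0, y)) x) ^ 2) < Jplus) :
    Filter.Tendsto (fun t => ⨆ x ∈ Set.Icc (0:ℝ) 1, |u (t, x)|) Filter.atTop (nhds 0) ∧
      Filter.Tendsto (fun t => ⨆ x ∈ Set.Icc (0:ℝ) 1, |v (t, x)|) Filter.atTop (nhds 0) :=
  coupled_burgers_trajectories_to_zero_general a b c hc Jplus hJplus u v hu hv hequ heqv hbc h0
end
end
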